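/- arXiv:2512.13788 — 2 statements merged into one kernel-verified Lean document; each statement's English description precedes it below -/
import Mathlib

section
/- For a discrete-time closed-loop system x_{k+1} = f(x_k) with positive definite stage cost c(x, π(x)) ≥ α(‖x‖) (α a class-K function), the value function V_π(x₀) = Σ_{k≥0} c(x_k, π(x_k)) is finite if and only if x₀ belongs to the backward reachable set of the target set X_f under π, provided π coincides with a backup controller on X_f whose value function is finite on X_f, and trajectories respect state and input constraints. -/
open Matrix
open scoped ENNReal

noncomputable section

/-- Closed-loop map of the linear system under policy `p`. -/
def clMap {n nu : ℕ} (A : Matrix (Fin n) (Fin n) ℝ) (B : Matrix (Fin n) (Fin nu) ℝ)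
    (p : (Fin n → ℝ) → Fin nu → ℝ) (x : Fin n → ℝ) : Fin n → ℝ :=
  A.mulVec x + B.mulVec (p x)

/-- Cost-to-go (value function) of policy `p` from an initial state. -/
def valueFn {n nu : ℕ} (A : Matrix (Fin n) (Fin n) ℝ) (B : Matrix (Fin n) (Fin nu) ℝ)
    (cost : (Fin n → ℝ) → (Fin nu → ℝ) → ℝ≥0∞)
    (p : (Fin n → ℝ) → Fin nu → ℝ) (x0 : Fin n → ℝ) : ℝ≥0∞ :=
  ∑' k : ℕ, cost ((clMap A B p)^[k] x0) (p ((clMap A B p)^[k] x0))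

/-- Closed-loop backward reachable set of `Xf` under policy `p`. -/
def backReach {n nu : ℕ} (A : Matrix (Fin n) (Fin n) ℝ) (B : Matrix (Fin n) (Fin nu) ℝ)
    (p : (Fin n → ℝ) → Fin nu → ℝ) (X : Set (Fin n → ℝ)) (U : Set (Fin nu → ℝ))
    (Xf : Set (Fin n → ℝ)) : Set (Fin n → ℝ) :=
  {x0 | x0 ∈ X ∧ ∃ N : ℕ,
    (∀ k < N, (clMap A B p)^[k] x0 ∈ X ∧ p ((clMap A B p)^[k] x0) ∈ U) ∧
    (clMap A B p)^[N] x0 ∈ Xf}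

/-- The value function of `π` is finite iff the initial state belongs to the
backward reachable set of the target set. -/
theorem stmt10 {n nu : ℕ}
    (A : Matrix (Fin n) (Fin n) ℝ) (B : Matrix (Fin n) (Fin nu) ℝ)
    (π πsafe : (Fin n → ℝ) → Fin nu → ℝ)
    (X : Set (Fin n → ℝ)) (U : Set (Fin nu → ℝ)) (Xf : Set (Fin n → ℝ))
    (cost : (Fin n → ℝ) → (Fin nu → ℝ) → ℝ≥0∞)
    (α : ℝ → ℝ≥0∞)
    (hα0 : α 0 = 0) (hαmono : StrictMonoOn α (Set.Ici 0))
    (hαcont : ContinuousOn α (Set.Ici 0))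
    (hlb : ∀ x u, α ‖x‖ ≤ cost x u)
    (hc00 : cost 0 0 = 0)
    (htop : ∀ x u, x ∉ X ∨ u ∉ U → cost x u = ⊤)
    (hfin : ∀ x ∈ X, ∀ u ∈ U, cost x u < ⊤)
    (hXfX : Xf ⊆ X) (h0int : (0 : Fin n → ℝ) ∈ interior Xf)
    (hXfinv : ∀ x ∈ Xf, πsafe x ∈ U ∧ clMap A B πsafe x ∈ Xf)
    (hVsafe : ∀ x ∈ Xf, valueFn A B cost πsafe x < ⊤)
    (hagree : ∀ x ∈ Xf, π x = πsafe x) :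
    ∀ x0 ∈ X, (valueFn A B cost π x0 < ⊤ ↔ x0 ∈ backReach A B π X U Xf) := by
  intro x0 hx0
  set f := clMap A B π with hf
  set g : ℕ → ℝ≥0∞ := fun k => cost (f^[k] x0) (π (f^[k] x0)) with hg
  constructor
  · intro hV
    have hterm : ∀ k, g k < ⊤ := fun k => lt_of_le_of_lt (ENNReal.le_tsum k) hV
    have hcons : ∀ k, f^[k] x0 ∈ X ∧ π (f^[k] x0) ∈ U := by
      intro k
      by_contra h
      rw [not_and_or] at h
      exact (hterm k).ne (htop _ _ h)
    -- get a ball around 0 inside Xf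
    obtain ⟨ε, hε, hball⟩ := Metric.mem_nhds_iff.mp (mem_interior_iff_mem_nhds.mp h0int)
    have hαε : 0 < α ε := by
      have := hαmono (Set.self_mem_Ici) (le_of_lt hε : (0:ℝ) ≤ ε) hε
      rwa [hα0] at this
    have htend : Filter.Tendsto g Filter.atTop (nhds 0) :=
      ENNReal.tendsto_atTop_zero_of_tsum_ne_top hV.ne
    have hev : ∀ᶠ k in Filter.atTop, g k < α ε :=
      htend.eventually (Filter.Tendsto.eventually_lt_const hαε Filter.tendsto_id)
    obtain ⟨N, hN⟩ := hev.exists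
    refine ⟨hx0, N, fun k _ => hcons k, ?_⟩
    apply hball
    rw [Metric.mem_ball, dist_zero_right]
    by_contra hcon
    push_neg at hcon
    have : α ε ≤ α ‖f^[N] x0‖ :=
      hαmono.monotoneOn (le_of_lt hε) (le_trans (le_of_lt hε) hcon) hcon
    exact absurd (lt_of_le_of_lt (le_trans this (hlb _ _)) hN) (lt_irrefl _)
  · rintro ⟨-, N, hcons, hNf⟩
    set xN := f^[N] x0 with hxN
    have htraj : ∀ j, f^[j] xN = (clMap A B πsafe)^[j] xN ∧ f^[j] xN ∈ Xf := by
      intro j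
      induction j with
      | zero => exact ⟨rfl, hNf⟩
      | succ j ih =>
        rw [Function.iterate_succ_apply', Function.iterate_succ_apply']
        have heq : f (f^[j] xN) = clMap A B πsafe (f^[j] xN) := by
          show clMap A B π (f^[j] xN) = _
          simp [clMap, hagree _ ih.2]
        constructor
        · rw [heq, ih.1]
        · rw [heq]
          exact (hXfinv _ ih.2).2
    have htail : (∑' i : ℕ, g (i + N)) = valueFn A B cost πsafe xN := by
      unfold valueFn
      apply tsum_congr
      intro i
      have hit : f^[i + N] x0 = f^[i] xN := Function.iterate_add_apply f i N x0
      have hmem : f^[i] xN ∈ Xf := (htraj i).2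
      show cost (f^[i + N] x0) (π (f^[i + N] x0)) =
        cost ((clMap A B πsafe)^[i] xN) (πsafe ((clMap A B πsafe)^[i] xN))
      rw [hit, hagree _ hmem, (htraj i).1]
    have hsplit : (∑ i ∈ Finset.range N, g i) + ∑' i : ℕ, g (i + N) = ∑' i : ℕ, g i :=
      ENNReal.summable.sum_add_tsum_nat_add'
    have hVeq : valueFn A B cost π x0 = ∑' i : ℕ, g i := rfl
    rw [hVeq, ← hsplit]
    apply ENNReal.add_lt_top.mpr
    constructor
    · rw [ENNReal.sum_lt_top]
      intro k hk
      obtain ⟨hkX, hkU⟩ := hcons k (Finset.mem_range.mp hk)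
      exact hfin _ hkX _ hkU
    · rw [htail]
      exact hVsafe _ hNf

end
end

section
/- Under the one-step improvement condition, the function W(x) = V_{π_safe}(x) is a Lyapunov function for the closed-loop system x⁺ = Ax + Bπ_θ(x) on R_{π_safe}(X_f): W is positive definite, W(0) = 0, and W(x) - W(Ax + Bπ_θ(x)) ≥ α(‖x‖) - α̃(‖x‖) ≥ 0 with equality only at x = 0. -/
open Matrix
open scoped ENNReal

noncomputable section

def Qfn {n nu : ℕ} (A : Matrix (Fin n) (Fin n) ℝ) (B : Matrix (Fin n) (Fin nu) ℝ)
    (cost : (Fin n → ℝ) → (Fin nu → ℝ) → ℝ≥0∞)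
    (p : (Fin n → ℝ) → Fin nu → ℝ) (x : Fin n → ℝ) (u : Fin nu → ℝ) : ℝ≥0∞ :=
  cost x u + valueFn A B cost p (A.mulVec x + B.mulVec u)

/-- Under the one-step improvement condition, `W = V_{π_safe}` is a Lyapunov
function for the closed loop under `π_θ` on the backward reachable set. -/
theorem stmt12 {n nu : ℕ}
    (A : Matrix (Fin n) (Fin n) ℝ) (B : Matrix (Fin n) (Fin nu) ℝ)
    (πθ πsafe : (Fin n → ℝ) → Fin nu → ℝ)
    (X : Set (Fin n → ℝ)) (U : Set (Fin nu → ℝ)) (Xf : Set (Fin n → ℝ))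
    (cost : (Fin n → ℝ) → (Fin nu → ℝ) → ℝ≥0∞)
    (α αtilde : ℝ → ℝ≥0∞)
    (hα0 : α 0 = 0) (hαmono : StrictMonoOn α (Set.Ici 0))
    (hαt0 : αtilde 0 = 0) (hαtmono : StrictMonoOn αtilde (Set.Ici 0))
    (hlt : ∀ r : ℝ, 0 < r → αtilde r < α r)
    (hlb : ∀ x u, α ‖x‖ ≤ cost x u)
    (hc00 : cost 0 0 = 0)
    (hπsafe0 : πsafe 0 = 0)
    (hVfin : ∀ x ∈ backReach A B πsafe X U Xf, valueFn A B cost πsafe x < ⊤)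
    (hinv : ∀ x ∈ backReach A B πsafe X U Xf,
      clMap A B πθ x ∈ backReach A B πsafe X U Xf)
    (himpr : ∀ x ∈ backReach A B πsafe X U Xf,
      Qfn A B cost πsafe x (πθ x) ≤ valueFn A B cost πsafe x + αtilde ‖x‖) :
    valueFn A B cost πsafe 0 = 0 ∧
    (∀ x ∈ backReach A B πsafe X U Xf, x ≠ 0 → 0 < valueFn A B cost πsafe x) ∧
    (∀ x ∈ backReach A B πsafe X U Xf,
      α ‖x‖ - αtilde ‖x‖ ≤
        valueFn A B cost πsafe x - valueFn A B cost πsafe (clMap A B πθ x)) ∧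
    (∀ x : Fin n → ℝ, x ≠ 0 → 0 < α ‖x‖ - αtilde ‖x‖) := by
  have hcl0 : clMap A B πsafe 0 = 0 := by
    simp [clMap, hπsafe0, Matrix.mulVec_zero]
  have hiter0 : ∀ k : ℕ, (clMap A B πsafe)^[k] (0 : Fin n → ℝ) = 0 := by
    intro k
    induction k with
    | zero => simp
    | succ k ih => rw [Function.iterate_succ_apply', ih, hcl0]
  have hle : ∀ x : Fin n → ℝ, αtilde ‖x‖ ≤ α ‖x‖ := by
    intro x
    rcases eq_or_lt_of_le (norm_nonneg x) with h | h
    · rw [← h, hα0, hαt0]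
    · exact (hlt _ h).le
  have hpos : ∀ x : Fin n → ℝ, x ≠ 0 → (0 : ℝ≥0∞) < α ‖x‖ := by
    intro x hx
    have : (0:ℝ) < ‖x‖ := norm_pos_iff.mpr hx
    calc (0:ℝ≥0∞) = α 0 := hα0.symm
    _ < α ‖x‖ := hαmono (Set.mem_Ici.mpr le_rfl) (norm_nonneg x) this
  have hfirst : ∀ x, cost x (πsafe x) ≤ valueFn A B cost πsafe x := by
    intro x
    have := ENNReal.le_tsum (f := fun k =>
      cost ((clMap A B πsafe)^[k] x) (πsafe ((clMap A B πsafe)^[k] x))) 0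
    simpa [valueFn] using this
  refine ⟨?_, ?_, ?_, ?_⟩
  · simp [valueFn, hiter0, hπsafe0, hc00]
  · intro x hx hx0
    exact lt_of_lt_of_le (lt_of_lt_of_le (hpos x hx0) (hlb x (πsafe x))) (hfirst x)
  · intro x hx
    set V := valueFn A B cost πsafe x with hV
    set Vp := valueFn A B cost πsafe (clMap A B πθ x) with hVp
    have himp : α ‖x‖ + Vp ≤ V + αtilde ‖x‖ := by
      have h1 := himpr x hx
      have h2 : α ‖x‖ + Vp ≤ Qfn A B cost πsafe x (πθ x) :=
        add_le_add_left (hlb x (πθ x)) _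
      exact h2.trans h1
    by_cases htop : αtilde ‖x‖ = ⊤
    · simp [htop]
    · have hVpfin : Vp ≠ ⊤ := (hVfin _ (hinv x hx)).ne
      refine ENNReal.le_sub_of_add_le_right hVpfin ?_
      calc α ‖x‖ - αtilde ‖x‖ + Vp
          = α ‖x‖ + Vp - αtilde ‖x‖ := ENNReal.sub_add_eq_add_sub (hle x) htop
        _ ≤ V + αtilde ‖x‖ - αtilde ‖x‖ := tsub_le_tsub_right himp _
        _ = V := ENNReal.add_sub_cancel_right htop
  · intro x hx0
    have : (0:ℝ) < ‖x‖ := norm_pos_iff.mpr hx0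
    exact tsub_pos_iff_lt.mpr (hlt _ this)

end
end
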